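/- arXiv:1902.10685 — 4 statements merged into one kernel-verified Lean document; each statement's English description precedes it below -/
import Mathlib

section
/- Let X be a metric space and let (p_n) be a sequence of Borel probability measures on X converging weakly to a Borel probability measure p. Suppose O ⊆ X is open, D ⊆ X is closed, and ν is a finite Borel measure such that p_n((O \ D) ∩ B) ≤ ν(B) for every Borel set B and every n. Then p((O \ D) ∩ B) ≤ ν(B) for every Borel set B. -/
open MeasureTheory Filter Topology

/-! The majorization passes to the limit on open sets by the portmanteau inequality
`q U ≤ liminf pₙ U`, since `(O \ D) ∩ U` is open; outer regularity of the finite measure `ν` on a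
metric space then extends it from open `U` to arbitrary `B`. -/

theorem ProbabilityMeasure.measure_le_of_tendsto_of_frequently_le {Ω ι : Type*} {L : Filter ι}
    [MeasurableSpace Ω] [TopologicalSpace Ω] [OpensMeasurableSpace Ω] [HasOuterApproxClosed Ω]
    {μ : ProbabilityMeasure Ω} {μs : ι → ProbabilityMeasure Ω} (hμs : Tendsto μs L (𝓝 μ))
    {G : Set Ω} (hG : IsOpen G) {c : ENNReal} (hc : ∃ᶠ i in L, (μs i : Measure Ω) G ≤ c) :
    (μ : Measure Ω) G ≤ c :=
  (ProbabilityMeasure.le_liminf_measure_open_of_tendsto hμs hG).trans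
    (liminf_le_of_frequently_le' hc)

theorem MeasureTheory.Measure.inter_le_of_forall_isOpen_inter_le {α : Type*} [MeasurableSpace α]
    [TopologicalSpace α] {μ ν : Measure α} [ν.OuterRegular] {A : Set α}
    (h : ∀ U, IsOpen U → μ (A ∩ U) ≤ ν U) (B : Set α) : μ (A ∩ B) ≤ ν B := by
  rw [B.measure_eq_iInf_isOpen ν]
  exact le_iInf fun U ↦ le_iInf₂ fun hBU hU ↦
    (measure_mono (Set.inter_subset_inter_right A hBU)).trans (h U hU)

theorem stmt_1 {X : Type*} [MetricSpace X] [MeasurableSpace X] [BorelSpace X]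
    (p : ℕ → ProbabilityMeasure X) (q : ProbabilityMeasure X)
    (hweak : Tendsto p atTop (nhds q))
    (O D : Set X) (hO : IsOpen O) (hD : IsClosed D)
    (ν : Measure X) [IsFiniteMeasure ν]
    (hmaj : ∀ B : Set X, MeasurableSet B → ∀ n : ℕ,
      (p n : Measure X) ((O \ D) ∩ B) ≤ ν B) :
    ∀ B : Set X, MeasurableSet B → (q : Measure X) ((O \ D) ∩ B) ≤ ν B := by
  intro B _
  refine Measure.inter_le_of_forall_isOpen_inter_le (fun U hU ↦ ?_) B
  exact ProbabilityMeasure.measure_le_of_tendsto_of_frequently_le hweak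
    ((hO.sdiff hD).inter hU) (Frequently.of_forall (hmaj U hU.measurableSet))
end

section
/- Let X be a metric space and let (p_n) be a sequence of Borel probability measures on X converging weakly to p. Suppose O ⊆ X is open, D ⊆ X is closed, ν a finite Borel measure, and (α_n) a sequence in (0,1) with α_n → 1, such that p_n((O \ D) ∩ B) ≤ ν(B) + (1 − α_n) for every Borel set B and every n. Then p((O \ D) ∩ B) ≤ ν(B) for every Borel set B. -/
open MeasureTheory Filter

theorem stmt_2 {X : Type*} [MetricSpace X] [MeasurableSpace X] [BorelSpace X]
    (p : ℕ → ProbabilityMeasure X) (q : ProbabilityMeasure X)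
    (hweak : Tendsto p atTop (nhds q))
    (O D : Set X) (hO : IsOpen O) (hD : IsClosed D)
    (ν : Measure X) [IsFiniteMeasure ν]
    (α : ℕ → ℝ) (hα : ∀ n, α n ∈ Set.Ioo (0:ℝ) 1)
    (hα1 : Tendsto α atTop (nhds 1))
    (hmaj : ∀ B : Set X, MeasurableSet B → ∀ n : ℕ,
      (p n : Measure X) ((O \ D) ∩ B) ≤ ν B + ENNReal.ofReal (1 - α n)) :
    ∀ B : Set X, MeasurableSet B → (q : Measure X) ((O \ D) ∩ B) ≤ ν B := by
  have hODopen : IsOpen (O \ D) := hO.sdiff hD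
  -- Step 1: bound on open sets
  have hopen : ∀ U : Set X, IsOpen U → (q : Measure X) ((O \ D) ∩ U) ≤ ν U := by
    intro U hU
    have h1 : (q : Measure X) ((O \ D) ∩ U) ≤
        Filter.liminf (fun n => (p n : Measure X) ((O \ D) ∩ U)) atTop := by
      simpa using ProbabilityMeasure.le_liminf_measure_open_of_tendsto hweak
        (hODopen.inter hU)
    refine h1.trans ?_
    have h2 : Filter.liminf (fun n => (p n : Measure X) ((O \ D) ∩ U)) atTop ≤
        Filter.liminf (fun n => ν U + ENNReal.ofReal (1 - α n)) atTop :=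
      Filter.liminf_le_liminf (Filter.Eventually.of_forall fun n => hmaj U hU.measurableSet n)
    refine h2.trans_eq ?_
    have htend : Tendsto (fun n => ν U + ENNReal.ofReal (1 - α n)) atTop (nhds (ν U + 0)) := by
      refine Tendsto.add tendsto_const_nhds ?_
      have : Tendsto (fun n => 1 - α n) atTop (nhds 0) := by
        have := hα1.const_sub 1
        simpa using this
      simpa using (ENNReal.tendsto_ofReal this)
    rw [add_zero] at htend
    exact htend.liminf_eq
  -- Step 2: outer regularity
  intro B hB
  have := Set.measure_eq_iInf_isOpen B ν
  rw [this, le_iInf_iff]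
  intro U
  rw [le_iInf_iff]
  intro hBU
  rw [le_iInf_iff]
  intro hUopen
  calc (q : Measure X) ((O \ D) ∩ B) ≤ (q : Measure X) ((O \ D) ∩ U) :=
        measure_mono (Set.inter_subset_inter_right _ hBU)
    _ ≤ ν U := hopen U hUopen
end

section
/- Consider the Markov chain on {0,1,2,...} with P(0,0)=1 and, for i ≥ 1, P(i,0)=β_i = 1/(i+1), P(i,i+1)=1−β_i, with one-stage costs c(0)=0 and c(i)=i+1 for i ≥ 1. Then for every initial state i ≥ 1, the limit superior expected average cost J(i) := limsup_{n→∞} (1/n) Σ_{k=0}^{n−1} E_i[c(x_k)] equals i. -/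
/-!
Started at `i ≥ 1`, the chain is almost surely either absorbed at `0` or at `i + k` at time `k`,
and it survives with probability `∏_{j=i}^{i+k-1} j/(j+1) = i/(i+k)`. So the expected cost at
time `k` is `(i+k+1) i/(i+k) = i + i/(i+k) → i`, and the Cesàro averages converge to `i`; in
particular their limsup is `i`.
-/

open MeasureTheory Filter Topology
open scoped ENNReal

lemma ae_mem_union_of_measure_inter_add_eq {Ω : Type*} [MeasurableSpace Ω] {μ : Measure Ω}
    [IsFiniteMeasure μ] {A B C : Set Ω} (hA : MeasurableSet A) (hB : MeasurableSet B)
    (hC : MeasurableSet C) (hAB : Disjoint A B) (h : μ (A ∩ C) + μ (B ∩ C) = μ C) :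
    ∀ᵐ ω ∂μ, ω ∈ C → ω ∈ A ∪ B := by
  have hinter : μ (C ∩ (A ∪ B)) = μ (A ∩ C) + μ (B ∩ C) := by
    rw [Set.inter_union_distrib_left, Set.inter_comm C A, Set.inter_comm C B]
    exact measure_union (hAB.mono Set.inter_subset_left Set.inter_subset_left) (hB.inter hC)
  have hnull : μ (C \ (A ∪ B)) = 0 := by
    have hsplit := measure_inter_add_sdiff C (hA.union hB) (μ := μ)
    rw [hinter, h, ← add_zero (μ C), add_assoc, zero_add] at hsplit
    exact (ENNReal.add_right_inj (measure_ne_top μ C)).1 hsplit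
  filter_upwards [measure_eq_zero_iff_ae_notMem.1 hnull] with ω hω hωC
  by_contra hωAB
  exact hω ⟨hωC, hωAB⟩

lemma lintegral_cost_eq_of_ae_eq_zero_or_eq {Ω : Type*} [MeasurableSpace Ω] {μ : Measure Ω}
    {y : Ω → ℕ} (hy : Measurable y) {j : ℕ} (hj : j ≠ 0) (h : ∀ᵐ ω ∂μ, y ω = 0 ∨ y ω = j) :
    ∫⁻ ω, (if y ω = 0 then 0 else (y ω : ℝ≥0∞) + 1) ∂μ = (j + 1) * μ {ω | y ω = j} := by
  have hcongr : (fun ω => if y ω = 0 then 0 else (y ω : ℝ≥0∞) + 1)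
      =ᵐ[μ] {ω | y ω = j}.indicator fun _ => (j : ℝ≥0∞) + 1 := by
    filter_upwards [h] with ω hω
    rcases hω with hω | hω
    · simp [hω, Ne.symm hj]
    · simp [hω, hj]
  exact (lintegral_congr_ae hcongr).trans
    (lintegral_indicator_const (hy (measurableSet_singleton j)) _)

lemma Filter.Tendsto.cesaro_ofReal {b : ℕ → ℝ} {L : ℝ} (hb : Tendsto b atTop (𝓝 L))
    (hb0 : ∀ k, 0 ≤ b k) :
    Tendsto (fun n : ℕ => (∑ k ∈ Finset.range n, ENNReal.ofReal (b k)) / n) atTop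
      (𝓝 (ENNReal.ofReal L)) := by
  have hreal := (ENNReal.continuous_ofReal.tendsto L).comp hb.cesaro
  refine hreal.congr' ?_
  filter_upwards [eventually_gt_atTop 0] with n hn
  have hn' : (0 : ℝ) < n := by exact_mod_cast hn
  rw [Function.comp_apply, inv_mul_eq_div, ENNReal.ofReal_div_of_pos hn',
    ENNReal.ofReal_sum_of_nonneg fun k _ => hb0 k, ENNReal.ofReal_natCast]

lemma tendsto_add_one_mul_div_add (a : ℝ) :
    Tendsto (fun k : ℕ => (a + k + 1) * (a / (a + k))) atTop (𝓝 a) := by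
  have hden : Tendsto (fun k : ℕ => a + k) atTop atTop :=
    tendsto_atTop_add_const_left _ a tendsto_natCast_atTop_atTop
  have hlim : Tendsto (fun k : ℕ => a + a / (a + k)) atTop (𝓝 a) := by
    simpa using tendsto_const_nhds.add (tendsto_const_nhds.div_atTop hden)
  refine hlim.congr' ?_
  filter_upwards [hden.eventually_gt_atTop 0] with k hk
  field_simp

structure IsClimbingChain {Ω : Type*} [MeasurableSpace Ω] (P : Measure Ω) (x : ℕ → Ω → ℕ) :
    Prop where
  measurable : ∀ n, Measurable (x n)
  absorbing : ∀ n, ∀ᵐ ω ∂P, x n ω = 0 → x (n + 1) ω = 0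
  measure_drop : ∀ n j, 1 ≤ j →
    P ({ω | x (n + 1) ω = 0} ∩ {ω | x n ω = j})
      = ENNReal.ofReal (1 / ((j : ℝ) + 1)) * P {ω | x n ω = j}
  measure_climb : ∀ n j, 1 ≤ j →
    P ({ω | x (n + 1) ω = j + 1} ∩ {ω | x n ω = j})
      = ENNReal.ofReal ((j : ℝ) / ((j : ℝ) + 1)) * P {ω | x n ω = j}

namespace IsClimbingChain

variable {Ω : Type*} [MeasurableSpace Ω] {P : Measure Ω} {x : ℕ → Ω → ℕ}

lemma measurableSet_eq (hx : IsClimbingChain P x) (n j : ℕ) : MeasurableSet {ω | x n ω = j} :=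
  hx.measurable n (measurableSet_singleton j)

lemma ae_eq_zero_or_eq_succ_and_measure_eq [IsFiniteMeasure P] (hx : IsClimbingChain P x)
    {n j : ℕ} (hj : 1 ≤ j)
    (h : ∀ᵐ ω ∂P, x n ω = 0 ∨ x n ω = j) :
    (∀ᵐ ω ∂P, x (n + 1) ω = 0 ∨ x (n + 1) ω = j + 1) ∧
      P {ω | x (n + 1) ω = j + 1} = ENNReal.ofReal (j / (j + 1)) * P {ω | x n ω = j} := by
  have hmass : P ({ω | x (n + 1) ω = 0} ∩ {ω | x n ω = j})
      + P ({ω | x (n + 1) ω = j + 1} ∩ {ω | x n ω = j}) = P {ω | x n ω = j} := by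
    rw [hx.measure_drop n j hj, hx.measure_climb n j hj, ← add_mul,
      ← ENNReal.ofReal_add (by positivity) (by positivity), ← add_div, add_comm (1 : ℝ),
      div_self (by positivity), ENNReal.ofReal_one, one_mul]
  have hsplit := ae_mem_union_of_measure_inter_add_eq (hx.measurableSet_eq (n + 1) 0)
    (hx.measurableSet_eq (n + 1) (j + 1)) (hx.measurableSet_eq n j)
    (Set.disjoint_left.2 fun ω h0 h1 => by simp_all) hmass
  have hsupp : ∀ᵐ ω ∂P, x (n + 1) ω = 0 ∨ x (n + 1) ω = j + 1 := by
    filter_upwards [h, hx.absorbing n, hsplit] with ω hω habs hωsplit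
    rcases hω with hω | hω
    · exact Or.inl (habs hω)
    · exact hωsplit hω
  refine ⟨hsupp, ?_⟩
  have hclimb_from : P ({ω | x (n + 1) ω = j + 1} \ {ω | x n ω = j}) = 0 := by
    refine measure_eq_zero_iff_ae_notMem.2 ?_
    filter_upwards [h, hx.absorbing n] with ω hω habs ⟨hω1, hωj⟩
    simp_all
  rw [← hx.measure_climb n j hj, measure_inter_conull' hclimb_from]

lemma ae_eq_zero_or_eq_add_and_measure_eq [IsProbabilityMeasure P] (hx : IsClimbingChain P x)
    {i : ℕ} (hi : 1 ≤ i) (hx0 : ∀ ω, x 0 ω = i) (k : ℕ) :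
    (∀ᵐ ω ∂P, x k ω = 0 ∨ x k ω = i + k) ∧
      P {ω | x k ω = i + k} = ENNReal.ofReal (i / (i + k)) := by
  induction k with
  | zero =>
    have hi' : (i : ℝ) ≠ 0 := by positivity
    exact ⟨.of_forall fun ω => Or.inr (hx0 ω), by simp [hx0, hi']⟩
  | succ k ih =>
    obtain ⟨hsupp, hmass⟩ := hx.ae_eq_zero_or_eq_succ_and_measure_eq (by omega) ih.1
    refine ⟨by simpa only [← add_assoc] using hsupp, ?_⟩
    rw [← add_assoc, hmass, ih.2, ← ENNReal.ofReal_mul (by positivity)]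
    congr 1
    push_cast
    field_simp
    ring

end IsClimbingChain

/-- Markov chain on ℕ with `0` absorbing, and from `j ≥ 1`: transition to `0` w.p.
`1/(j+1)`, to `j+1` w.p. `j/(j+1)`; one-stage cost `c 0 = 0`, `c j = j+1` for `j ≥ 1`.
Then for every initial state `i ≥ 1`, the limsup expected average cost equals `i`. -/
theorem stmt_5 {Ω : Type*} [MeasurableSpace Ω] (P : Measure Ω) [IsProbabilityMeasure P]
    (x : ℕ → Ω → ℕ) (hmeas : ∀ n, Measurable (x n))
    (i : ℕ) (hi : 1 ≤ i) (hx0 : ∀ ω, x 0 ω = i)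
    (habs : ∀ n, ∀ᵐ ω ∂P, x n ω = 0 → x (n+1) ω = 0)
    (htrans0 : ∀ n j, 1 ≤ j →
      P ({ω | x (n+1) ω = 0} ∩ {ω | x n ω = j})
        = ENNReal.ofReal (1 / ((j : ℝ) + 1)) * P {ω | x n ω = j})
    (htrans1 : ∀ n j, 1 ≤ j →
      P ({ω | x (n+1) ω = j+1} ∩ {ω | x n ω = j})
        = ENNReal.ofReal ((j : ℝ) / ((j : ℝ) + 1)) * P {ω | x n ω = j}) :
    Filter.atTop.limsup
      (fun n : ℕ =>
        (∑ k ∈ Finset.range n,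
          ∫⁻ ω, (if x k ω = 0 then 0 else (x k ω : ℝ≥0∞) + 1) ∂P) / (n : ℝ≥0∞))
      = (i : ℝ≥0∞) := by
  have hx : IsClimbingChain P x := ⟨hmeas, habs, htrans0, htrans1⟩
  have hcost : ∀ k, ∫⁻ ω, (if x k ω = 0 then 0 else (x k ω : ℝ≥0∞) + 1) ∂P
      = ENNReal.ofReal ((i + k + 1) * (i / (i + k))) := fun k => by
    obtain ⟨hsupp, hmass⟩ := hx.ae_eq_zero_or_eq_add_and_measure_eq hi hx0 k
    rw [lintegral_cost_eq_of_ae_eq_zero_or_eq (hmeas k) (by omega) hsupp, hmass,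
      ENNReal.ofReal_mul (by positivity)]
    norm_cast
  simp_rw [hcost]
  rw [((tendsto_add_one_mul_div_add (i : ℝ)).cesaro_ofReal fun k => by positivity).limsup_eq,
    ENNReal.ofReal_natCast]
end

section
/- Let (c_n) be a sequence of nonnegative extended reals and α ∈ (0,1). Define J := limsup_{n→∞} (1/n) Σ_{k=0}^{n−1} c_k and m_α := (1−α) Σ_{n=0}^∞ α^n c_n. Then limsup_{α↑1} m_α ≤ J. -/
open Filter Finset
open scoped ENNReal Topology

/-!
Writing `S n = ∑ k < n, c k`, summation by parts (a Cauchy product with the geometric series)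
gives `(1 - a) ∑ aⁿ cₙ = (1 - a)² ∑ aⁿ S (n + 1)`: the Abel mean is an average of the Cesàro
partial sums against weights `(1 - a)² aⁿ (n + 1)` of total mass one. If the Cesàro means are
eventually below `b`, then `S n ≤ b N + b n` for all `n`, so the Abel mean is at most
`(1 - a) b N + b`, which tends to `b` as `a → 1`.
-/

namespace ENNReal

-- `Summable.tsum_mul_tsum_eq_tsum_sum_antidiagonal` needs a topological semiring, which `ℝ≥0∞`
-- is not.
theorem tsum_mul_tsum_eq_tsum_sum_antidiagonal (f g : ℕ → ℝ≥0∞) :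
    (∑' n, f n) * ∑' n, g n = ∑' n, ∑ kl ∈ antidiagonal n, f kl.1 * g kl.2 := by
  simp_rw [← ENNReal.tsum_mul_right, ← ENNReal.tsum_mul_left]
  rw [← ENNReal.tsum_prod,
    ← HasAntidiagonal.sigmaAntidiagonalEquivProd.tsum_eq, ENNReal.tsum_sigma']
  refine tsum_congr fun n => ?_
  rw [tsum_fintype]
  exact sum_coe_sort (antidiagonal n) fun kl => f kl.1 * g kl.2

theorem tsum_pow_mul_sum_range_succ (a : ℝ≥0∞) (c : ℕ → ℝ≥0∞) :
    ∑' n, a ^ n * ∑ k ∈ range (n + 1), c k = (1 - a)⁻¹ * ∑' n, a ^ n * c n := by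
  have hterm : ∀ n, a ^ n * ∑ k ∈ range (n + 1), c k
      = ∑ kl ∈ antidiagonal n, a ^ kl.1 * c kl.1 * a ^ kl.2 := by
    intro n
    rw [Nat.sum_antidiagonal_eq_sum_range_succ (fun k l => a ^ k * c k * a ^ l), mul_sum]
    refine sum_congr rfl fun k hk => ?_
    rw [← pow_sub_mul_pow a (Nat.le_of_lt_succ (mem_range.1 hk))]
    ring
  simp_rw [hterm, ← tsum_geometric, mul_comm (∑' n, a ^ n)]
  exact (tsum_mul_tsum_eq_tsum_sum_antidiagonal (fun n => a ^ n * c n) (a ^ ·)).symm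

theorem tsum_pow_mul_natCast_succ (a : ℝ≥0∞) :
    ∑' n : ℕ, a ^ n * ((n : ℝ≥0∞) + 1) = (1 - a)⁻¹ * (1 - a)⁻¹ := by
  simpa [tsum_geometric] using tsum_pow_mul_sum_range_succ a 1

theorem one_sub_mul_tsum_pow_mul_le {a C b : ℝ≥0∞} (ha : a < 1) {c : ℕ → ℝ≥0∞}
    (hc : ∀ n, ∑ k ∈ range n, c k ≤ C + b * n) :
    (1 - a) * ∑' n, a ^ n * c n ≤ (1 - a) * C + b := by
  have hpartial : ∀ n : ℕ, a ^ n * ∑ k ∈ range (n + 1), c k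
      ≤ a ^ n * C + b * (a ^ n * ((n : ℝ≥0∞) + 1)) := fun n =>
    calc a ^ n * ∑ k ∈ range (n + 1), c k ≤ a ^ n * (C + b * ((n + 1 : ℕ) : ℝ≥0∞)) := by
          gcongr; exact hc (n + 1)
      _ = _ := by push_cast; ring
  have hsum := ENNReal.tsum_le_tsum hpartial
  rw [tsum_pow_mul_sum_range_succ, ENNReal.tsum_add, ENNReal.tsum_mul_right,
    ENNReal.tsum_mul_left, tsum_geometric, tsum_pow_mul_natCast_succ] at hsum
  have hu : (1 - a) * (1 - a)⁻¹ = 1 :=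
    ENNReal.mul_inv_cancel (tsub_pos_of_lt ha).ne' (by finiteness)
  generalize 1 - a = u at hu hsum ⊢
  calc u * ∑' n, a ^ n * c n = (u * u) * (u⁻¹ * ∑' n, a ^ n * c n) := by
        rw [mul_assoc, ← mul_assoc u u⁻¹, hu, one_mul]
    _ ≤ (u * u) * (u⁻¹ * C + b * (u⁻¹ * u⁻¹)) := by gcongr
    _ = (u * u⁻¹) * (u * C) + b * ((u * u⁻¹) * (u * u⁻¹)) := by ring
    _ = u * C + b := by rw [hu]; ring

end ENNReal

theorem exists_sum_range_le_of_limsup_div_lt {c : ℕ → ℝ≥0∞} {b : ℝ≥0∞}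
    (h : atTop.limsup (fun n : ℕ => (∑ k ∈ range n, c k) / n) < b) :
    ∃ N : ℕ, ∀ n, ∑ k ∈ range n, c k ≤ b * N + b * n := by
  obtain ⟨N, hN⟩ := eventually_atTop.1 (eventually_lt_of_limsup_lt h)
  have hle : ∀ n ≥ N, ∑ k ∈ range n, c k ≤ b * n := by
    intro n hn
    rcases n.eq_zero_or_pos with rfl | hpos
    · simp
    · exact (ENNReal.div_le_iff (by simpa using hpos.ne') (by simp)).1 (hN n hn).le
  refine ⟨N, fun n => ?_⟩
  rcases le_total N n with hNn | hnN
  · exact (hle n hNn).trans le_add_self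
  · calc ∑ k ∈ range n, c k ≤ ∑ k ∈ range N, c k := sum_le_sum_of_subset (range_mono hnN)
      _ ≤ b * N := hle N le_rfl
      _ ≤ b * N + b * n := le_self_add

theorem stmt_10 (c : ℕ → ℝ≥0∞) :
    Filter.limsup
      (fun α : ℝ => (1 - ENNReal.ofReal α) * ∑' n : ℕ, (ENNReal.ofReal α) ^ n * c n)
      (nhdsWithin 1 (Set.Ioo (0:ℝ) 1))
    ≤ Filter.atTop.limsup (fun n : ℕ => (∑ k ∈ Finset.range n, c k) / (n : ℝ≥0∞)) := by
  rw [nhdsWithin_Ioo_eq_nhdsLT zero_lt_one]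
  refine le_of_forall_gt_imp_ge_of_dense fun b hJb => ?_
  rcases eq_or_ne b ⊤ with rfl | hb
  · exact le_top
  obtain ⟨N, hN⟩ := exists_sum_range_le_of_limsup_div_lt hJb
  have hlim : Tendsto (fun α : ℝ => (1 - ENNReal.ofReal α) * (b * N) + b) (𝓝[<] 1) (𝓝 b) := by
    have h : Tendsto (fun α : ℝ => 1 - ENNReal.ofReal α) (𝓝 1) (𝓝 0) := by
      simpa [Function.comp_def] using
        ((ENNReal.continuous_sub_left ENNReal.one_ne_top).tendsto _).comp
          (ENNReal.continuous_ofReal.tendsto 1)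
    simpa using ((ENNReal.Tendsto.mul_const h (.inr (by finiteness))).add_const b).mono_left
      nhdsWithin_le_nhds
  calc _ ≤ limsup (fun α : ℝ => (1 - ENNReal.ofReal α) * (b * N) + b) (𝓝[<] 1) := by
        refine limsup_le_limsup ?_
        filter_upwards [self_mem_nhdsWithin] with α hα
        exact ENNReal.one_sub_mul_tsum_pow_mul_le (ENNReal.ofReal_lt_one.2 hα) hN
    _ = b := hlim.limsup_eq
end
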